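/- Let μ > 0. Then as E → 0⁺, ∫_{−E}^{E} 1/(A₁(E,y)·A₂(E,y)) dy = E/(2μ²) − E³/(6μ⁴) + 19·E⁵/(240μ⁶) − 13·E⁷/(280μ⁸) + O(E⁸). -/

import Mathlib

/-!
Put `a = 4μ²`, `p = E² + y²` and `m = E²y²`. Then `A₁A₂ = √((a + p)² - 4m)`, and on
`|y| ≤ E` its reciprocal differs from the polynomial `taylorNum a p m / a⁴` by
`O(p⁴) = O(E⁸)`: after rationalising, the error is
`(a⁸ - n²((a + p)² - 4m)) / (a⁴ s (a⁴ + n s))` with `s = A₁A₂` and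
`n = taylorNum a p m`, and the numerator is a polynomial vanishing to order four in `p`
because `0 ≤ m ≤ p²/4`. Integrating the polynomial over `[-E, E]` gives exactly the four
stated terms.
-/

open Real Filter Asymptotics Topology MeasureTheory

noncomputable def A1 (μ x y : ℝ) : ℝ := Real.sqrt ((x + y)^2 + 4*μ^2)
noncomputable def A2 (μ x y : ℝ) : ℝ := Real.sqrt ((x - y)^2 + 4*μ^2)

/-- `taylorNum a p m / a ^ 4` is the Taylor polynomial of `((a + p) ^ 2 - 4 * m) ^ (-1/2)` at
`p = m = 0`, truncated at weighted degree `3` where `p` has weight `1` and `m` weight `2`. -/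
def taylorNum (a p m : ℝ) : ℝ := (a - p) * (a ^ 2 + p ^ 2) + 2 * m * (a - 3 * p)

lemma pow_eight_sub_taylorNum_sq_mul (a p m : ℝ) :
    a ^ 8 - taylorNum a p m ^ 2 * ((a + p) ^ 2 - 4 * m) =
      p ^ 4 * (2 * a ^ 4 - p ^ 4) + 8 * m * p ^ 2 * ((a - p) * (a ^ 2 + p ^ 2)) * (3 * a + p)
        + 4 * m ^ 2 * (a - 3 * p) * (3 * a ^ 3 - 3 * a ^ 2 * p + 9 * a * p ^ 2 - p ^ 3)
        + 16 * m ^ 3 * (a - 3 * p) ^ 2 := by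
  unfold taylorNum; ring

section

variable {a p m : ℝ}

lemma abs_pow_eight_sub_taylorNum_sq_mul_le (hp : 0 ≤ p) (hpa : 2 * p ≤ a) (hm : 0 ≤ m)
    (hmp : 4 * m ≤ p ^ 2) :
    |a ^ 8 - taylorNum a p m ^ 2 * ((a + p) ^ 2 - 4 * m)| ≤ 11 * a ^ 4 * p ^ 4 := by
  have ha : 0 ≤ a := by linarith
  have hpa' : p ≤ a := by linarith
  have hp4 : p ^ 4 ≤ a ^ 4 := by gcongr
  have h₁ : p ^ 4 * (2 * a ^ 4 - p ^ 4) ≤ 2 * a ^ 4 * p ^ 4 := by nlinarith [pow_nonneg hp 4]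
  have h₁' : 0 ≤ p ^ 4 * (2 * a ^ 4 - p ^ 4) :=
    mul_nonneg (by positivity) (by linarith [pow_nonneg ha 4])
  have hn₀ : 0 ≤ (a - p) * (a ^ 2 + p ^ 2) := mul_nonneg (by linarith) (by positivity)
  have hn₀' : (a - p) * (a ^ 2 + p ^ 2) ≤ a ^ 3 := by
    nlinarith [mul_nonneg hp (sq_nonneg (a - p))]
  have h₂ : 8 * m * p ^ 2 * ((a - p) * (a ^ 2 + p ^ 2)) * (3 * a + p) ≤ 7 * a ^ 4 * p ^ 4 :=
    calc 8 * m * p ^ 2 * ((a - p) * (a ^ 2 + p ^ 2)) * (3 * a + p)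
        ≤ 8 * (p ^ 2 / 4) * p ^ 2 * a ^ 3 * (3 * a + a / 2) := by gcongr <;> linarith
      _ = 7 * a ^ 4 * p ^ 4 := by ring
  have h₂' : 0 ≤ 8 * m * p ^ 2 * ((a - p) * (a ^ 2 + p ^ 2)) * (3 * a + p) := by positivity
  have hK : 0 ≤ 3 * a ^ 3 - 3 * a ^ 2 * p + 9 * a * p ^ 2 - p ^ 3 := by
    nlinarith [mul_nonneg ha hp]
  have hK' : 3 * a ^ 3 - 3 * a ^ 2 * p + 9 * a * p ^ 2 - p ^ 3 ≤ 6 * a ^ 3 := by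
    nlinarith [mul_nonneg ha hp]
  have h₃ : |4 * m ^ 2 * (a - 3 * p) * (3 * a ^ 3 - 3 * a ^ 2 * p + 9 * a * p ^ 2 - p ^ 3)|
      ≤ 3 / 2 * a ^ 4 * p ^ 4 :=
    calc _ = 4 * m ^ 2 * |a - 3 * p| * (3 * a ^ 3 - 3 * a ^ 2 * p + 9 * a * p ^ 2 - p ^ 3) := by
          rw [abs_mul, abs_mul, abs_of_nonneg hK, abs_of_nonneg (by positivity)]
      _ ≤ 4 * (p ^ 2 / 4) ^ 2 * a * (6 * a ^ 3) := by
          gcongr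
          · linarith
          · rw [abs_le]; constructor <;> linarith
      _ = 3 / 2 * a ^ 4 * p ^ 4 := by ring
  have h₄ : 16 * m ^ 3 * (a - 3 * p) ^ 2 ≤ a ^ 4 * p ^ 4 / 2 :=
    calc 16 * m ^ 3 * (a - 3 * p) ^ 2 ≤ 16 * (p ^ 2 / 4) ^ 3 * a ^ 2 := by
          have : (a - 3 * p) ^ 2 ≤ a ^ 2 := by nlinarith [mul_nonneg hp (sub_nonneg.2 hpa)]
          gcongr
          linarith
      _ = p ^ 4 * (p ^ 2 * a ^ 2) / 4 := by ring
      _ ≤ p ^ 4 * (a ^ 2 * a ^ 2) / 4 := by gcongr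
      _ ≤ a ^ 4 * p ^ 4 / 2 := by nlinarith [pow_nonneg hp 4, pow_nonneg ha 4]
  have h₄' : 0 ≤ 16 * m ^ 3 * (a - 3 * p) ^ 2 := by positivity
  rw [pow_eight_sub_taylorNum_sq_mul, abs_le]
  obtain ⟨h₃l, h₃u⟩ := abs_le.mp h₃
  constructor <;> nlinarith

lemma taylorNum_nonneg (hp : 0 ≤ p) (hpa : 2 * p ≤ a) (hm : 0 ≤ m)
    (hmp : 4 * m ≤ p ^ 2) : 0 ≤ taylorNum a p m := by
  unfold taylorNum
  nlinarith [mul_nonneg hm hp, mul_nonneg (sub_nonneg.2 hpa) (sq_nonneg a), mul_nonneg hp hp]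

lemma abs_one_div_sqrt_sub_taylorNum_div_le (ha : 0 < a) (hp : 0 ≤ p) (hpa : 2 * p ≤ a)
    (hm : 0 ≤ m) (hmp : 4 * m ≤ p ^ 2) :
    |1 / √((a + p) ^ 2 - 4 * m) - taylorNum a p m / a ^ 4| ≤ 11 * p ^ 4 / a ^ 5 := by
  set Q := (a + p) ^ 2 - 4 * m
  set n := taylorNum a p m
  have hQ : a ^ 2 ≤ Q := by nlinarith
  have hs : a ≤ √Q := Real.le_sqrt_of_sq_le hQ
  have hsQ : √Q ^ 2 = Q := Real.sq_sqrt ((sq_nonneg a).trans hQ)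
  have hs₀ : 0 < √Q := ha.trans_le hs
  have hn : 0 ≤ n := taylorNum_nonneg hp hpa hm hmp
  have hD : a ^ 9 ≤ a ^ 4 * √Q * (a ^ 4 + n * √Q) :=
    calc a ^ 9 = a ^ 4 * a * (a ^ 4 + 0) := by ring
      _ ≤ a ^ 4 * √Q * (a ^ 4 + n * √Q) := by gcongr; positivity
  have hdiff :
      1 / √Q - n / a ^ 4 = (a ^ 8 - n ^ 2 * Q) / (a ^ 4 * √Q * (a ^ 4 + n * √Q)) := by
    field_simp
    linear_combination (-n ^ 2) * hsQ
  rw [hdiff, abs_div, abs_of_pos (lt_of_lt_of_le (by positivity) hD)]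
  calc |a ^ 8 - n ^ 2 * Q| / (a ^ 4 * √Q * (a ^ 4 + n * √Q))
      ≤ 11 * a ^ 4 * p ^ 4 / a ^ 9 :=
        div_le_div₀ (by positivity) (abs_pow_eight_sub_taylorNum_sq_mul_le hp hpa hm hmp)
          (by positivity) hD
    _ = 11 * p ^ 4 / a ^ 5 := by field_simp

end

lemma A1_mul_A2 (μ x y : ℝ) :
    A1 μ x y * A2 μ x y = √((4 * μ ^ 2 + (x ^ 2 + y ^ 2)) ^ 2 - 4 * (x ^ 2 * y ^ 2)) := by
  rw [A1, A2, ← Real.sqrt_mul (by positivity)]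
  ring_nf

lemma abs_one_div_A1_mul_A2_sub_taylorNum_le {μ E y : ℝ} (hμ : 0 < μ) (hEμ : E ^ 2 ≤ μ ^ 2)
    (hy : y ^ 2 ≤ E ^ 2) :
    |1 / (A1 μ E y * A2 μ E y)
        - taylorNum (4 * μ ^ 2) (E ^ 2 + y ^ 2) (E ^ 2 * y ^ 2) / (4 * μ ^ 2) ^ 4|
      ≤ 176 * E ^ 8 / (4 * μ ^ 2) ^ 5 := by
  rw [A1_mul_A2]
  refine (abs_one_div_sqrt_sub_taylorNum_div_le (by positivity) (by positivity) (by linarith)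
    (by positivity) (by nlinarith [sq_nonneg (E ^ 2 - y ^ 2)])).trans ?_
  have hp : (E ^ 2 + y ^ 2) ^ 4 ≤ (2 * E ^ 2) ^ 4 := by gcongr; linarith
  calc 11 * (E ^ 2 + y ^ 2) ^ 4 / (4 * μ ^ 2) ^ 5 ≤ 11 * (2 * E ^ 2) ^ 4 / (4 * μ ^ 2) ^ 5 := by
        gcongr
    _ = 176 * E ^ 8 / (4 * μ ^ 2) ^ 5 := by ring

lemma integral_taylorNum_div (a E : ℝ) :
    ∫ y in (-E)..E, taylorNum a (E ^ 2 + y ^ 2) (E ^ 2 * y ^ 2) / a ^ 4 =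
      2 * E / a - 8 * E ^ 3 / (3 * a ^ 2) + 76 * E ^ 5 / (15 * a ^ 3)
        - 416 * E ^ 7 / (35 * a ^ 4) := by
  have hpoly : ∀ y : ℝ, taylorNum a (E ^ 2 + y ^ 2) (E ^ 2 * y ^ 2) / a ^ 4 =
      ((a ^ 3 - a ^ 2 * E ^ 2 + a * E ^ 4 - E ^ 6) + (-a ^ 2 + 4 * a * E ^ 2 - 9 * E ^ 4) * y ^ 2
        + (a - 9 * E ^ 2) * y ^ 4 - y ^ 6) / a ^ 4 := by
    intro y; unfold taylorNum; ring
  simp only [hpoly]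
  rw [intervalIntegral.integral_div, intervalIntegral.integral_sub, intervalIntegral.integral_add,
    intervalIntegral.integral_add]
  · simp only [intervalIntegral.integral_const_mul, integral_pow, intervalIntegral.integral_const,
      smul_eq_mul]
    field_simp
    ring
  all_goals exact Continuous.intervalIntegrable (by fun_prop) _ _

theorem stmt13 (μ : ℝ) (hμ : 0 < μ) :
    (fun E => (∫ y in (-E)..E, 1 / (A1 μ E y * A2 μ E y))
        - (E/(2*μ^2) - E^3/(6*μ^4) + 19*E^5/(240*μ^6) - 13*E^7/(280*μ^8)))
      =O[𝓝[>] (0:ℝ)] fun E => E^8 := by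
  refine IsBigO.of_bound (352 * μ / (4 * μ ^ 2) ^ 5) ?_
  filter_upwards [Ioc_mem_nhdsGT hμ] with E ⟨hE, hEμ⟩
  set P := fun y => taylorNum (4 * μ ^ 2) (E ^ 2 + y ^ 2) (E ^ 2 * y ^ 2) / (4 * μ ^ 2) ^ 4
  have hf : IntervalIntegrable (fun y => 1 / (A1 μ E y * A2 μ E y)) volume (-E) E :=
    (continuous_const.div (by unfold A1 A2; fun_prop) fun y => by unfold A1 A2; positivity
      ).intervalIntegrable _ _
  have hP : IntervalIntegrable P volume (-E) E :=
    Continuous.intervalIntegrable (by unfold P taylorNum; fun_prop) _ _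
  have hP_int : E/(2*μ^2) - E^3/(6*μ^4) + 19*E^5/(240*μ^6) - 13*E^7/(280*μ^8)
      = ∫ y in (-E)..E, P y := by
    rw [integral_taylorNum_div]
    field_simp
    ring
  rw [hP_int, ← intervalIntegral.integral_sub hf hP]
  calc ‖∫ y in (-E)..E, (1 / (A1 μ E y * A2 μ E y) - P y)‖
      ≤ 176 * E ^ 8 / (4 * μ ^ 2) ^ 5 * |E - -E| := by
        refine intervalIntegral.norm_integral_le_of_norm_le_const fun y hy => ?_
        rw [Set.uIoc_of_le (by linarith)] at hy
        exact abs_one_div_A1_mul_A2_sub_taylorNum_le hμ (by gcongr)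
          (sq_le_sq' hy.1.le hy.2)
    _ = 352 * E ^ 8 / (4 * μ ^ 2) ^ 5 * E := by
        rw [show E - -E = 2 * E by ring, abs_of_pos (by linarith)]
        ring
    _ ≤ 352 * E ^ 8 / (4 * μ ^ 2) ^ 5 * μ := by gcongr
    _ = 352 * μ / (4 * μ ^ 2) ^ 5 * ‖E ^ 8‖ := by
        rw [Real.norm_of_nonneg (by positivity)]
        ring
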